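/- Fix α > 0 and λ1, λ2 > 0 with λ = λ1 + λ2, and write c = (1 + 1/α)^{α+1}. Then for every μ > 0, the gamma-service correlation coefficient satisfies CC(μ) ≥ CC(α·λ) = −2·λ1·λ2 / (λ · sqrt((c·λ − 2·λ1)·(c·λ − 2·λ2))); that is, over all μ > 0 the correlation coefficient is minimized at μ = α·λ. -/

import Mathlib

open Filter Real

/-- Correlation coefficient of the two stationary AoIs in the two-source M/G/1/1
pushout server with common gamma(α, μ) service times and arrival rates `l1, l2`. -/
noncomputable def gammaAoiCC (α l1 l2 μ : ℝ) : ℝ :=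
  -(2 * α * l1 * l2) / ((l1 + l2) *
    Real.sqrt (((μ + (l1 + l2)) ^ (α + 1) / μ ^ α - 2 * α * l1) *
      ((μ + (l1 + l2)) ^ (α + 1) / μ ^ α - 2 * α * l2)))

/-!
With `g(μ) = (μ + λ)^(α+1) / μ^α`, the correlation coefficient is
`CC(μ) = -2αλ₁λ₂ / (λ √((g(μ) - 2αλ₁)(g(μ) - 2αλ₂)))`, an increasing function of `g(μ)` as long as
`g(μ) > 2α max(λ₁, λ₂)`. Weighted AM-GM with weights `α/(α+1)` and `1/(α+1)` shows that `g` is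
minimized at `μ = αλ`, with minimum `α c λ`; and `c > 2` by Bernoulli's inequality, which keeps both
factors under the root positive.
-/

lemma rpow_mul_le_add_rpow_add_one {α x y : ℝ} (hα : 0 < α) (hx : 0 ≤ x) (hy : 0 ≤ y) :
    ((α + 1) / α * x) ^ α * ((α + 1) * y) ≤ (x + y) ^ (α + 1) := by
  have hα1 : 0 < α + 1 := by linarith
  have hamgm := geom_mean_le_arith_mean2_weighted (w₁ := α / (α + 1)) (w₂ := 1 / (α + 1))
    (p₁ := (α + 1) / α * x) (p₂ := (α + 1) * y) (by positivity) (by positivity) (by positivity)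
    (by positivity) (by field_simp)
  have hmean : α / (α + 1) * ((α + 1) / α * x) + 1 / (α + 1) * ((α + 1) * y) = x + y := by
    field_simp
  rw [hmean] at hamgm
  have hpow := rpow_le_rpow (by positivity) hamgm hα1.le
  rwa [mul_rpow (by positivity) (by positivity), ← rpow_mul (by positivity),
    ← rpow_mul (by positivity), div_mul_cancel₀ _ hα1.ne', one_div_mul_cancel hα1.ne',
    rpow_one] at hpow

lemma mul_one_add_one_div_rpow_add_one {α : ℝ} (hα : 0 < α) :
    α * (1 + 1 / α) ^ (α + 1) = ((α + 1) / α) ^ α * (α + 1) := by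
  rw [show 1 + 1 / α = (α + 1) / α by field_simp, rpow_add_one (by positivity)]
  field_simp

lemma two_lt_one_add_one_div_rpow_add_one {α : ℝ} (hα : 0 < α) :
    2 < (1 + 1 / α) ^ (α + 1) := by
  have hbernoulli := one_add_mul_self_le_rpow_one_add (s := 1 / α) (p := α + 1)
    (by linarith [one_div_pos.2 hα]) (by linarith)
  have h : 1 + (α + 1) * (1 / α) = 2 + 1 / α := by field_simp; ring
  linarith [one_div_pos.2 hα]

lemma mul_one_add_one_div_rpow_mul_le {α L μ : ℝ} (hα : 0 < α) (hL : 0 ≤ L) (hμ : 0 < μ) :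
    α * ((1 + 1 / α) ^ (α + 1) * L) ≤ (μ + L) ^ (α + 1) / μ ^ α := by
  rw [le_div_iff₀ (rpow_pos_of_pos hμ α)]
  calc α * ((1 + 1 / α) ^ (α + 1) * L) * μ ^ α
      = ((α + 1) / α * μ) ^ α * ((α + 1) * L) := by
        rw [mul_rpow (by positivity) hμ.le, ← mul_assoc, mul_one_add_one_div_rpow_add_one hα]
        ring
    _ ≤ (μ + L) ^ (α + 1) := rpow_mul_le_add_rpow_add_one hα hμ.le hL

lemma mul_add_rpow_div_mul_rpow {α L : ℝ} (hα : 0 < α) (hL : 0 < L) :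
    (α * L + L) ^ (α + 1) / (α * L) ^ α = α * ((1 + 1 / α) ^ (α + 1) * L) := by
  have hαL : 0 < α * L := by positivity
  rw [show α * L + L = (α + 1) / α * (α * L) by field_simp, rpow_add_one (by positivity),
    mul_rpow (by positivity) hαL.le, ← mul_assoc α, mul_one_add_one_div_rpow_add_one hα]
  field_simp [(rpow_pos_of_pos hαL α).ne']

lemma neg_div_mul_sqrt_le {N D a b g h : ℝ} (hN : 0 ≤ N) (hD : 0 < D) (ha : a < g) (hb : b < g)
    (hgh : g ≤ h) :
    -N / (D * √((g - a) * (g - b))) ≤ -N / (D * √((h - a) * (h - b))) := by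
  have hpos : 0 < D * √((g - a) * (g - b)) :=
    mul_pos hD (sqrt_pos.2 (mul_pos (sub_pos.2 ha) (sub_pos.2 hb)))
  rw [neg_div, neg_div, neg_le_neg_iff]
  refine div_le_div_of_nonneg_left hN hpos ?_
  gcongr
  all_goals linarith

lemma neg_div_mul_sqrt_mul_sub_mul {α a b D G : ℝ} (hα : 0 < α) :
    -(2 * α * a * b) / (D * √((α * G - 2 * α * a) * (α * G - 2 * α * b))) =
      -(2 * a * b) / (D * √((G - 2 * a) * (G - 2 * b))) := by
  rw [show (α * G - 2 * α * a) * (α * G - 2 * α * b) = α ^ 2 * ((G - 2 * a) * (G - 2 * b)) by ring,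
    sqrt_mul (sq_nonneg α), sqrt_sq hα.le, show -(2 * α * a * b) = α * -(2 * a * b) by ring,
    mul_left_comm, mul_div_mul_left _ _ hα.ne']

/-- With `c = (1 + 1/α)^(α+1)`, the gamma-service AoI correlation coefficient is
minimized over `μ > 0` at `μ = α·λ`, where it equals
`−2·λ1·λ2/(λ·sqrt((c·λ − 2·λ1)·(c·λ − 2·λ2)))`. -/
theorem gammaAoiCC_min_at_alpha_lambda (α lam1 lam2 : ℝ) (hα : 0 < α)
    (hlam1 : 0 < lam1) (hlam2 : 0 < lam2) :
    gammaAoiCC α lam1 lam2 (α * (lam1 + lam2)) =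
      -(2 * lam1 * lam2) / ((lam1 + lam2) *
        Real.sqrt (((1 + 1 / α) ^ (α + 1) * (lam1 + lam2) - 2 * lam1) *
          ((1 + 1 / α) ^ (α + 1) * (lam1 + lam2) - 2 * lam2))) ∧
    ∀ μ : ℝ, 0 < μ →
      -(2 * lam1 * lam2) / ((lam1 + lam2) *
          Real.sqrt (((1 + 1 / α) ^ (α + 1) * (lam1 + lam2) - 2 * lam1) *
            ((1 + 1 / α) ^ (α + 1) * (lam1 + lam2) - 2 * lam2))) ≤
        gammaAoiCC α lam1 lam2 μ := by
  have hL : 0 < lam1 + lam2 := by positivity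
  have hmin : gammaAoiCC α lam1 lam2 (α * (lam1 + lam2)) =
      -(2 * lam1 * lam2) / ((lam1 + lam2) *
        √(((1 + 1 / α) ^ (α + 1) * (lam1 + lam2) - 2 * lam1) *
          ((1 + 1 / α) ^ (α + 1) * (lam1 + lam2) - 2 * lam2))) := by
    rw [gammaAoiCC, mul_add_rpow_div_mul_rpow hα hL, neg_div_mul_sqrt_mul_sub_mul hα]
  refine ⟨hmin, fun μ hμ => ?_⟩
  have hcL := mul_lt_mul_of_pos_right (two_lt_one_add_one_div_rpow_add_one hα) hL
  have hlt : ∀ l, l < lam1 + lam2 → 2 * α * l < α * ((1 + 1 / α) ^ (α + 1) * (lam1 + lam2)) :=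
    fun l hl => by nlinarith
  rw [← hmin, gammaAoiCC, gammaAoiCC, mul_add_rpow_div_mul_rpow hα hL]
  exact neg_div_mul_sqrt_le (by positivity) hL (hlt lam1 (by linarith)) (hlt lam2 (by linarith))
    (mul_one_add_one_div_rpow_mul_le hα hL.le hμ)
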